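/- If p : E → B is a fibration, then p has the weakly homotopically unique path lifting property (whupl) if and only if for every point e ∈ E the induced homomorphism p₊ : π₁(E, e) → π₁(B, p(e)) on fundamental groups is injective. -/

import Mathlib

universe u

open scoped unitInterval

/-- `p` has the weakly homotopically unique path lifting property (whupl). -/
def Whupl {E B : Type*} [TopologicalSpace E] [TopologicalSpace B] (p : C(E, B)) : Prop :=
  ∀ α β : C(unitInterval, E), α 0 = β 0 → α 1 = β 1 → p.comp α = p.comp β →
    α.HomotopicRel β {0, 1}

/-- `p` is a (Hurewicz) fibration: it has the homotopy lifting property with respect to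
every topological space. -/
def IsFibration {E B : Type*} [TopologicalSpace E] [TopologicalSpace B] (p : C(E, B)) : Prop :=
  ∀ (X : Type u) [TopologicalSpace X] (f : C(X, E)) (F : C(X × unitInterval, B)),
    (∀ x, F (x, 0) = p (f x)) →
    ∃ F' : C(X × unitInterval, E), (∀ z, p (F' z) = F z) ∧ (∀ x, F' (x, 0) = f x)

/-- The homomorphism induced by a continuous map `p` on fundamental groups. -/
noncomputable def inducedPi1Hom {E B : Type u} [TopologicalSpace E] [TopologicalSpace B]
    (p : C(E, B)) (e : E) :
    FundamentalGroup E e →* FundamentalGroup B (p e) :=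
  CategoryTheory.Functor.mapEnd _
    (FundamentalGroupoid.fundamentalGroupoidFunctor.map
      (X := TopCat.of E) (Y := TopCat.of B) (TopCat.ofHom p))


/-!
If `p ∘ γ` is null-homotopic for a loop `γ`, lift the null-homotopy through the fibration. The
lifted square `I × I → E` is defined on a simply connected space, so its bottom edge `γ` is
homotopic to the path around the other three sides, which lies in a single fibre; by whupl that
path is null-homotopic. Conversely, if `α` and `β` have the same projection then `p ∘ (α · β⁻¹)`
is null-homotopic, so injectivity of `p₊` makes `α · β⁻¹` null-homotopic, i.e. `α ≃ β` rel
endpoints.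
-/

open unitInterval

instance unitInterval.contractibleSpace : ContractibleSpace I :=
  (convex_Icc (0 : ℝ) 1).contractibleSpace (Set.nonempty_Icc.2 zero_le_one)

theorem Path.Homotopic.of_trans_symm {X : Type*} [TopologicalSpace X] {x y : X}
    {α β : Path x y} (h : (α.trans β.symm).Homotopic (Path.refl x)) : α.Homotopic β :=
  calc Path.Homotopic α (α.trans (Path.refl y)) := (trans_refl α).symm
    Path.Homotopic _ (α.trans (β.symm.trans β)) := (refl α).hcomp (symm_trans β).symm
    Path.Homotopic _ ((α.trans β.symm).trans β) := (trans_assoc _ _ _).symm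
    Path.Homotopic _ ((Path.refl x).trans β) := h.hcomp (refl β)
    Path.Homotopic _ β := refl_trans β

theorem FundamentalGroup.map_injective_iff {X Y : Type*} [TopologicalSpace X]
    [TopologicalSpace Y] (f : C(X, Y)) (x : X) :
    Function.Injective (map f x) ↔
      ∀ γ : Path x x, (γ.map f.continuous).Homotopic (Path.refl (f x)) →
        γ.Homotopic (Path.refl x) := by
  rw [injective_iff_map_eq_one]
  refine Path.Homotopic.Quotient.mk_surjective.forall.trans (forall_congr' fun γ => ?_)
  simp only [map_apply, one_def, ← Path.Homotopic.Quotient.mk_map,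
    ← Path.Homotopic.Quotient.mk_refl]
  exact imp_congr Path.Homotopic.Quotient.eq Path.Homotopic.Quotient.eq

theorem whupl_iff_homotopic_of_map_eq {E B : Type*} [TopologicalSpace E] [TopologicalSpace B]
    (p : C(E, B)) :
    Whupl p ↔ ∀ ⦃x y : E⦄ (α β : Path x y), α.map p.continuous = β.map p.continuous →
      α.Homotopic β := by
  constructor
  · intro h x y α β hαβ
    exact h α β (α.source.trans β.source.symm) (α.target.trans β.target.symm)
      (congrArg (·.toContinuousMap) hαβ)
  · intro h α β h₀ h₁ hαβ
    exact h (⟨α, h₀, h₁⟩ : Path (β 0) (β 1)) ⟨β, rfl, rfl⟩ (Path.ext (congrArg (⇑) hαβ))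

theorem IsFibration.exists_homotopic_loop_in_fiber {E B : Type u} [TopologicalSpace E]
    [TopologicalSpace B] {p : C(E, B)} (hp : IsFibration p) {e : E} (γ : Path e e)
    (hγ : (γ.map p.continuous).Homotopic (Path.refl (p e))) :
    ∃ δ : Path e e, γ.Homotopic δ ∧ ∀ t, p (δ t) = p e := by
  obtain ⟨H⟩ := hγ
  obtain ⟨F, hpF, hF₀⟩ := hp (ULift I) ⟨fun s => γ s.down, by fun_prop⟩
    ⟨fun x => H (x.2, x.1.down), by fun_prop⟩ (fun s => by simp)
  let G : C(I × I, E) := F.comp ⟨fun x => (ULift.up x.1, x.2), by fun_prop⟩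
  have hpG : ∀ s t, p (G (s, t)) = H (t, s) := fun s t => hpF _
  let bottom : Path ((0 : I), (0 : I)) (1, 0) := Path.id.prod (Path.refl 0)
  let boundary : Path ((0 : I), (0 : I)) (1, 0) :=
    ((Path.refl 0).prod Path.id).trans ((Path.id.prod (Path.refl 1)).trans
      ((Path.refl 1).prod Path.id).symm)
  have hG₀ : G (0, 0) = e := (hF₀ _).trans γ.source
  have hG₁ : G (1, 0) = e := (hF₀ _).trans γ.target
  have hγG : γ = (bottom.map G.continuous).cast hG₀.symm hG₁.symm := by
    ext s
    exact (hF₀ (ULift.up s)).symm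
  refine ⟨(boundary.map G.continuous).cast hG₀.symm hG₁.symm, ?_, fun t => ?_⟩
  · rw [hγG]
    exact ((SimplyConnectedSpace.paths_homotopic bottom boundary).map G).pathCast _ _
  · have hbd : ∀ s, (boundary s).1 = 0 ∨ (boundary s).2 = 1 ∨ (boundary s).1 = 1 := by
      intro s
      simp only [boundary, Path.trans_apply]
      split_ifs <;> simp
    change p (G (boundary t)) = p e
    rw [← Prod.mk.eta (p := boundary t), hpG]
    rcases hbd t with h | h | h <;> rw [h]
    · exact H.source _
    · exact H.apply_one _
    · exact H.target _

theorem fibration_whupl_iff_pi1_injective {E B : Type u} [TopologicalSpace E]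
    [TopologicalSpace B] (p : C(E, B)) (hp : IsFibration p) :
    Whupl p ↔ ∀ e : E, Function.Injective (inducedPi1Hom p e) := by
  simp only [whupl_iff_homotopic_of_map_eq, show inducedPi1Hom p = FundamentalGroup.map p from rfl,
    FundamentalGroup.map_injective_iff]
  constructor
  · intro hw e γ hγ
    obtain ⟨δ, hγδ, hδ⟩ := hp.exists_homotopic_loop_in_fiber γ hγ
    exact hγδ.trans (hw δ (Path.refl e) (Path.ext (funext hδ)))
  · intro hinj x y α β hαβ
    refine Path.Homotopic.of_trans_symm (hinj x _ ?_)
    rw [Path.map_trans, ← Path.map_symm, hαβ]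
    exact Path.Homotopic.trans_symm _
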